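/- arXiv:1301.0034 — 2 statements merged into one kernel-verified Lean document; each statement's English description precedes it below -/
import Mathlib

section
/- Suppose λ = 1 is the only eigenvalue of D with |λ| = 1. Then 1 is an eigenvalue of L and every eigenvalue λ of L with |λ| = 1 satisfies λ = 1. Moreover, if the algebraic multiplicity of 1 as an eigenvalue of D equals 1, then the algebraic multiplicity of 1 as an eigenvalue of L also equals 1. -/
/-!
For the Hilbert–Schmidt norm both `C` and `D` are contractions, hence so is `L`: the inequality
`‖∑ Aⱼ ρ Aⱼ*‖ ≤ ‖ρ‖` is Cauchy–Schwarz, using `∑ Aⱼ*Aⱼ = I` and `∑ AⱼAⱼ* = I` once each, and `C`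
is the case of the single Kraus operator `U`. If `Lρ = λρ` with `|λ| = 1`, then the proper convex
combination `qCρ + pDρ` of two points of the closed ball of radius `‖ρ‖` lies on its sphere, so
strict convexity of the Hilbert–Schmidt norm forces `Cρ = Dρ = λρ`. A contraction has
no Jordan block of size `≥ 2` at the eigenvalue `1`, since `Lσ = σ + τ`, `Lτ = τ` would make
`Lᵏσ = σ + kτ` unbounded. Hence the algebraic multiplicity of `1` for `L` is
`dim ker (L - 1) ≤ dim ker (D - 1) ≤ 1`, and `L 1 = 1`.
-/

open Matrix

/-- The algebraic multiplicity of `μ` as an eigenvalue of `T`: the dimension of the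
generalized eigenspace `⋃_{m ≥ 1} ker ((T - μ·id)^m)`. -/
noncomputable def algMult {H : Type*} [AddCommGroup H] [Module ℂ H]
    (T : Module.End ℂ H) (μ : ℂ) : ℕ :=
  Module.finrank ℂ
    (⨆ m : ℕ, LinearMap.ker ((T - μ • (1 : Module.End ℂ H)) ^ m) : Submodule ℂ H)

theorem finrank_ker_sub_le_algMult {H : Type*} [AddCommGroup H] [Module ℂ H]
    [FiniteDimensional ℂ H] (T : Module.End ℂ H) (μ : ℂ) :
    Module.finrank ℂ (LinearMap.ker (T - μ • 1)) ≤ algMult T μ :=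
  Submodule.finrank_mono (le_iSup_of_le 1 (by rw [pow_one]))

namespace Module.End

section Contraction

variable {𝕜 E : Type*} [RCLike 𝕜] [NormedAddCommGroup E] [NormedSpace 𝕜 E]
  {T : Module.End 𝕜 E}

theorem norm_pow_apply_le (hT : ∀ x, ‖T x‖ ≤ ‖x‖) (k : ℕ) (x : E) : ‖(T ^ k) x‖ ≤ ‖x‖ := by
  induction k with
  | zero => simp
  | succ k ih => rw [pow_succ', mul_apply]; exact (hT _).trans ih

theorem sub_one_apply_eq_zero_of_sub_one_sq_apply (hT : ∀ x, ‖T x‖ ≤ ‖x‖) {x : E}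
    (hx : (T - 1) ((T - 1) x) = 0) : (T - 1) x = 0 := by
  set y := (T - 1) x with hy
  have hTy : T y = y := by simpa [sub_eq_zero] using hx
  have hTx : T x = x + y := by simp [hy]
  have hpow (k : ℕ) : (T ^ k) x = x + k • y := by
    induction k with
    | zero => simp
    | succ k ih => rw [pow_succ', mul_apply, ih, map_add, map_nsmul, hTx, hTy, succ_nsmul]; abel
  have hbound (k : ℕ) : k * ‖y‖ ≤ 2 * ‖x‖ :=
    calc k * ‖y‖ = ‖(T ^ k) x - x‖ := by
          rw [hpow, add_sub_cancel_left, RCLike.norm_nsmul 𝕜, nsmul_eq_mul]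
      _ ≤ ‖(T ^ k) x‖ + ‖x‖ := norm_sub_le _ _
      _ ≤ 2 * ‖x‖ := by linarith [norm_pow_apply_le hT k x]
  by_contra hy0
  obtain ⟨k, hk⟩ := exists_nat_gt (2 * ‖x‖ / ‖y‖)
  rw [div_lt_iff₀ (norm_pos_iff.mpr hy0)] at hk
  linarith [hbound k]

theorem ker_sub_one_pow_le_ker (hT : ∀ x, ‖T x‖ ≤ ‖x‖) (k : ℕ) :
    LinearMap.ker ((T - 1) ^ k) ≤ LinearMap.ker (T - 1) := by
  induction k with
  | zero => intro x hx; simp_all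
  | succ k ih =>
    intro x hx
    rw [LinearMap.mem_ker, pow_succ, mul_apply, ← LinearMap.mem_ker] at hx
    exact sub_one_apply_eq_zero_of_sub_one_sq_apply hT (ih hx)

end Contraction

section ConvexCombination

variable {E : Type*} [NormedAddCommGroup E] [NormedSpace ℂ E] {C D : Module.End ℂ E} {p q : ℝ}

theorem combo_apply_eq_of_apply_eq (hqp : q + p = 1) {x y : E} (hCx : C x = y) (hDx : D x = y) :
    ((q : ℂ) • C + (p : ℂ) • D) x = y := by
  rw [LinearMap.add_apply, LinearMap.smul_apply, LinearMap.smul_apply, hCx, hDx, ← add_smul,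
    ← Complex.ofReal_add, hqp, Complex.ofReal_one, one_smul]

theorem norm_combo_apply_le (hp : 0 < p) (hq : 0 < q) (hqp : q + p = 1)
    (hC : ∀ x, ‖C x‖ ≤ ‖x‖) (hD : ∀ x, ‖D x‖ ≤ ‖x‖) (x : E) :
    ‖((q : ℂ) • C + (p : ℂ) • D) x‖ ≤ ‖x‖ :=
  calc ‖((q : ℂ) • C + (p : ℂ) • D) x‖ ≤ q * ‖C x‖ + p * ‖D x‖ := by
        simpa [norm_smul, abs_of_pos hp, abs_of_pos hq] using
          norm_add_le ((q : ℂ) • C x) ((p : ℂ) • D x)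
    _ ≤ q * ‖x‖ + p * ‖x‖ := by gcongr <;> simp_all
    _ = ‖x‖ := by rw [← add_mul, hqp, one_mul]

theorem apply_eq_smul_of_combo_apply_eq_smul [StrictConvexSpace ℝ E] (hp : 0 < p) (hq : 0 < q)
    (hqp : q + p = 1) (hC : ∀ x, ‖C x‖ ≤ ‖x‖) (hD : ∀ x, ‖D x‖ ≤ ‖x‖) {lam : ℂ} {x : E}
    (hx : ((q : ℂ) • C + (p : ℂ) • D) x = lam • x) (hlam : ‖lam‖ = 1) : D x = lam • x := by
  have hCD : C x = D x := by
    by_contra hne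
    have hlt := norm_combo_lt_of_ne (hC x) (hD x) hne hq hp hqp
    simp only [LinearMap.add_apply, LinearMap.smul_apply, Complex.coe_smul] at hx
    rw [hx, norm_smul, hlam, one_mul] at hlt
    exact lt_irrefl _ hlt
  rw [← hx, combo_apply_eq_of_apply_eq hqp hCD rfl]

end ConvexCombination

end Module.End

theorem algMult_one_eq_finrank_ker_of_norm_le {E : Type*} [NormedAddCommGroup E]
    [NormedSpace ℂ E] {T : Module.End ℂ E} (hT : ∀ x, ‖T x‖ ≤ ‖x‖) :
    algMult T 1 = Module.finrank ℂ (LinearMap.ker (T - 1)) := by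
  have hsup : ⨆ m : ℕ, LinearMap.ker ((T - 1) ^ m) = LinearMap.ker (T - 1) :=
    le_antisymm (iSup_le (Module.End.ker_sub_one_pow_le_ker hT))
      (le_iSup_of_le 1 (by rw [pow_one]))
  rw [algMult, one_smul, hsup]

namespace HilbertSchmidt

variable {n ι : Type*} [Fintype n] [DecidableEq n] [Fintype ι]

-- `toMatrixInnerProductSpace M` is `⟪X, Y⟫ = Tr (Y M Xᴴ)`, which for `M = 1` is the
-- Hilbert–Schmidt inner product `Tr (X* Y)`.
open scoped ComplexOrder in
noncomputable abbrev normedAddCommGroup : NormedAddCommGroup (Matrix n n ℂ) :=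
  Matrix.toMatrixNormedAddCommGroup 1 PosDef.one

attribute [local instance] normedAddCommGroup

open scoped ComplexOrder in
noncomputable abbrev innerProductSpace : InnerProductSpace ℂ (Matrix n n ℂ) :=
  Matrix.toMatrixInnerProductSpace 1 PosDef.one.posSemidef

attribute [local instance] innerProductSpace

theorem strictConvexSpace : StrictConvexSpace ℝ (Matrix n n ℂ) :=
  letI := InnerProductSpace.rclikeToReal ℂ (Matrix n n ℂ)
  inferInstance

theorem inner_eq (X Y : Matrix n n ℂ) : inner ℂ X Y = (Y * Xᴴ).trace := by
  -- `inner ℂ X Y` elaborates through a `CStarModule` instance, equal to ours only up to unfolding.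
  have h : @inner ℂ _ innerProductSpace.toInner X Y = (Y * 1 * Xᴴ).trace := by
    unfold innerProductSpace Matrix.toMatrixInnerProductSpace InnerProductSpace.ofCore
    with_unfolding_all rfl
  rwa [Matrix.mul_one] at h

theorem norm_sq_eq (X : Matrix n n ℂ) : ‖X‖ ^ 2 = (X * Xᴴ).trace.re := by
  rw [@norm_sq_eq_re_inner ℂ, inner_eq]
  rfl

theorem sum_norm_mul_sq_right {A : ι → Matrix n n ℂ} (hA : ∑ j, A j * (A j)ᴴ = 1)
    (X : Matrix n n ℂ) : ∑ j, ‖X * A j‖ ^ 2 = ‖X‖ ^ 2 := by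
  have h (j : ι) : X * A j * (X * A j)ᴴ = X * (A j * (A j)ᴴ) * Xᴴ := by
    simp only [conjTranspose_mul, Matrix.mul_assoc]
  simp only [norm_sq_eq, ← Complex.re_sum, ← trace_sum, h, ← Matrix.sum_mul, ← Matrix.mul_sum, hA,
    Matrix.mul_one]

theorem sum_norm_mul_sq_left {A : ι → Matrix n n ℂ} (hA : ∑ j, (A j)ᴴ * A j = 1)
    (X : Matrix n n ℂ) : ∑ j, ‖A j * X‖ ^ 2 = ‖X‖ ^ 2 := by
  have h (j : ι) : (A j * X * (A j * X)ᴴ).trace = ((A j)ᴴ * A j * (X * Xᴴ)).trace := by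
    rw [conjTranspose_mul, ← trace_mul_cycle, Matrix.mul_assoc, Matrix.mul_assoc,
      ← Matrix.mul_assoc, trace_mul_comm]
  simp only [norm_sq_eq, ← Complex.re_sum, h, ← trace_sum, ← Matrix.sum_mul, hA, Matrix.one_mul]

theorem norm_sum_mul_mul_conjTranspose_le {A : ι → Matrix n n ℂ} (hA1 : ∑ j, (A j)ᴴ * A j = 1)
    (hA2 : ∑ j, A j * (A j)ᴴ = 1) (X : Matrix n n ℂ) :
    ‖∑ j, A j * X * (A j)ᴴ‖ ≤ ‖X‖ := by
  set W := ∑ j, A j * X * (A j)ᴴ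
  have hterm (j : ι) : inner ℂ W (A j * X * (A j)ᴴ) = inner ℂ (W * A j) (A j * X) := by
    simp only [inner_eq, conjTranspose_mul, Matrix.mul_assoc]
  have hle : ‖W‖ ^ 2 ≤ ‖W‖ * ‖X‖ :=
    calc ‖W‖ ^ 2 = RCLike.re (inner ℂ W (∑ j, A j * X * (A j)ᴴ)) := norm_sq_eq_re_inner W
      _ = ∑ j, RCLike.re (inner ℂ (W * A j) (A j * X)) := by simp only [inner_sum, map_sum, hterm]
      _ ≤ ∑ j, ‖W * A j‖ * ‖A j * X‖ := Finset.sum_le_sum fun j _ => re_inner_le_norm _ _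
      _ ≤ √(∑ j, ‖W * A j‖ ^ 2) * √(∑ j, ‖A j * X‖ ^ 2) := Real.sum_mul_le_sqrt_mul_sqrt _ _ _
      _ = ‖W‖ * ‖X‖ := by
          rw [sum_norm_mul_sq_right hA2, sum_norm_mul_sq_left hA1, Real.sqrt_sq (norm_nonneg _),
            Real.sqrt_sq (norm_nonneg _)]
  nlinarith [norm_nonneg W, norm_nonneg X]

end HilbertSchmidt

theorem stmt5_general {n m : ℕ} (hn : 1 ≤ n)
    (U : Matrix (Fin n) (Fin n) ℂ) (hU : U ∈ Matrix.unitaryGroup (Fin n) ℂ)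
    (A : Fin m → Matrix (Fin n) (Fin n) ℂ)
    (hA1 : ∑ j, (A j)ᴴ * A j = 1) (hA2 : ∑ j, A j * (A j)ᴴ = 1)
    (p q : ℝ) (hp : 0 < p) (hp1 : p < 1) (hq : q = 1 - p)
    (C D L : Module.End ℂ (Matrix (Fin n) (Fin n) ℂ))
    (hC : ∀ ρ, C ρ = U * ρ * Uᴴ)
    (hD : ∀ ρ, D ρ = ∑ j, A j * ρ * (A j)ᴴ)
    (hL : L = (q : ℂ) • C + (p : ℂ) • D)
    (hDonly : ∀ (lam : ℂ) (ρ : Matrix (Fin n) (Fin n) ℂ),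
      ρ ≠ 0 → D ρ = lam • ρ → ‖lam‖ = 1 → lam = 1) :
    ((∃ ρ, ρ ≠ 0 ∧ L ρ = ρ) ∧
      ∀ (lam : ℂ) (ρ : Matrix (Fin n) (Fin n) ℂ),
        ρ ≠ 0 → L ρ = lam • ρ → ‖lam‖ = 1 → lam = 1) ∧
    (algMult D 1 = 1 → algMult L 1 = 1) := by
  have : Nonempty (Fin n) := ⟨⟨0, hn⟩⟩
  let := HilbertSchmidt.normedAddCommGroup (n := Fin n)
  let := HilbertSchmidt.innerProductSpace (n := Fin n)
  have := HilbertSchmidt.strictConvexSpace (n := Fin n)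
  have hq0 : 0 < q := by linarith
  have hqp : q + p = 1 := by linarith
  have hUU : Uᴴ * U = 1 := mem_unitaryGroup_iff'.mp hU
  have hUU' : U * Uᴴ = 1 := mem_unitaryGroup_iff.mp hU
  have hCc (ρ) : ‖C ρ‖ ≤ ‖ρ‖ := by
    simpa [hC] using HilbertSchmidt.norm_sum_mul_mul_conjTranspose_le (A := fun _ : Unit => U)
      (by simpa using hUU) (by simpa using hUU') ρ
  have hDc (ρ) : ‖D ρ‖ ≤ ‖ρ‖ := by
    simpa [hD] using HilbertSchmidt.norm_sum_mul_mul_conjTranspose_le hA1 hA2 ρ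
  have hL1 : L 1 = 1 := hL ▸ Module.End.combo_apply_eq_of_apply_eq hqp
    (by rw [hC, Matrix.mul_one, hUU']) (by simp only [hD, Matrix.mul_one, hA2])
  have hLD (lam : ℂ) (ρ) (h : L ρ = lam • ρ) (hlam : ‖lam‖ = 1) : D ρ = lam • ρ :=
    Module.End.apply_eq_smul_of_combo_apply_eq_smul hp hq0 hqp hCc hDc (hL ▸ h) hlam
  refine ⟨⟨⟨1, one_ne_zero, hL1⟩, fun lam ρ hρ h hlam => hDonly lam ρ hρ (hLD lam ρ h hlam) hlam⟩,
    fun hDmult => ?_⟩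
  rw [algMult_one_eq_finrank_ker_of_norm_le
    (hL ▸ Module.End.norm_combo_apply_le hp hq0 hqp hCc hDc)]
  refine le_antisymm ?_ (Submodule.one_le_finrank_iff.mpr ?_)
  · calc Module.finrank ℂ (LinearMap.ker (L - 1))
        ≤ Module.finrank ℂ (LinearMap.ker (D - (1 : ℂ) • 1)) :=
          Submodule.finrank_mono fun ρ hρ => by
            simpa [sub_eq_zero] using hLD 1 ρ (by simpa [sub_eq_zero] using hρ) norm_one
      _ ≤ 1 := hDmult ▸ finrank_ker_sub_le_algMult D 1
  · exact (Submodule.ne_bot_iff _).mpr ⟨1, by simp [hL1], one_ne_zero⟩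

/-- Let `U` be unitary, `A₁, …, A_m` Kraus operators with
`∑ Aⱼ* Aⱼ = I = ∑ Aⱼ Aⱼ*`, `C(ρ) = U ρ U*`, `D(ρ) = ∑ Aⱼ ρ Aⱼ*`, and `L = qC + pD` with
`0 < p < 1`, `q = 1 - p`, all acting on `n×n` complex matrices.  If `λ = 1` is the only
eigenvalue of `D` with `|λ| = 1`, then `1` is an eigenvalue of `L` and every eigenvalue `λ`
of `L` with `|λ| = 1` satisfies `λ = 1`; moreover, if the algebraic multiplicity of `1` as an
eigenvalue of `D` is `1`, then the algebraic multiplicity of `1` as an eigenvalue of `L` is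
also `1`. -/
theorem stmt5 {n m : ℕ} (hn : 1 ≤ n)
    (U : Matrix (Fin n) (Fin n) ℂ) (hU : U ∈ Matrix.unitaryGroup (Fin n) ℂ)
    (A : Fin m → Matrix (Fin n) (Fin n) ℂ)
    (hA1 : ∑ j, (A j)ᴴ * A j = 1) (hA2 : ∑ j, A j * (A j)ᴴ = 1)
    (p q : ℝ) (hp : 0 < p) (hp1 : p < 1) (hq : q = 1 - p)
    (C D L : Module.End ℂ (Matrix (Fin n) (Fin n) ℂ))
    (hC : ∀ ρ, C ρ = U * ρ * Uᴴ)
    (hD : ∀ ρ, D ρ = ∑ j, A j * ρ * (A j)ᴴ)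
    (hL : L = (q : ℂ) • C + (p : ℂ) • D)
    (hDeig : ∃ ρ, ρ ≠ 0 ∧ D ρ = ρ)
    (hDonly : ∀ (lam : ℂ) (ρ : Matrix (Fin n) (Fin n) ℂ),
      ρ ≠ 0 → D ρ = lam • ρ → ‖lam‖ = 1 → lam = 1) :
    ((∃ ρ, ρ ≠ 0 ∧ L ρ = ρ) ∧
      ∀ (lam : ℂ) (ρ : Matrix (Fin n) (Fin n) ℂ),
        ρ ≠ 0 → L ρ = lam • ρ → ‖lam‖ = 1 → lam = 1) ∧
    (algMult D 1 = 1 → algMult L 1 = 1) :=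
  stmt5_general hn U hU A hA1 hA2 p q hp hp1 hq C D L hC hD hL hDonly
end

section
/- For every k ∈ ℝ and every p with 0 < p ≤ 1 and q = 1 − p, the superoperator L_{k,k}(ρ) = p(B₁ρB₁* + B₂ρB₂*) + q·U_kρU_k* on 3×3 complex matrices, where U_k = e^{−ik}B₁ + e^{ik}B₂, satisfies the eigenvalue condition: 1 is an eigenvalue of L_{k,k} of algebraic multiplicity one and every other eigenvalue of L_{k,k} has absolute value strictly less than 1. -/
open Matrix Complex

/-!
With `U` the unitary of the statement, `B₁ = Π₁U`, `B₂ = Π₂U` and `U_k = DU` for a diagonal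
unitary `D`, so `L(ρ) = C ⊙ (UρU*)` is a Schur (entrywise) multiplier applied after a unitary
conjugation. Here `C` is `1` on the two diagonal blocks `{0,1}²`, `{2}²` and has modulus `|q| < 1`
off them. Conjugation by `U` preserves the Hilbert–Schmidt norm and `|C i j| ≤ 1`, so every
eigenvalue has modulus at most `1`. For a unimodular eigenvalue `μ` the norm must be preserved,
which kills the off-block entries: then `μρ = UρU*` with `ρ` block diagonal, and solving this
linear system gives `μ = 1` and `ρ` scalar. Finally `L` preserves the trace and `tr 1 ≠ 0`, so
the eigenvalue `1` carries no Jordan block and its algebraic multiplicity is `1`.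
-/

open ComplexConjugate

theorem Module.End.iSup_ker_pow_eq_ker {K V : Type*} [DivisionRing K] [AddCommGroup V]
    [Module K V] {f : Module.End K V} (h : LinearMap.ker (f ^ 2) ≤ LinearMap.ker f) :
    ⨆ m : ℕ, LinearMap.ker (f ^ m) = LinearMap.ker f := by
  have hconst := Module.End.ker_pow_constant (f := f) (k := 1)
    (by rw [pow_one]; exact le_antisymm (LinearMap.ker_le_ker_comp f f) h)
  refine le_antisymm (iSup_le fun m => ?_) (le_iSup_of_le 1 (by rw [pow_one]))
  cases m with
  | zero => simp [Module.End.one_eq_id]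
  | succ m => rw [add_comm, ← hconst m, pow_one]

theorem algMult_eq_one_of_invariant_functional {H : Type*} [AddCommGroup H] [Module ℂ H]
    {T : Module.End ℂ H} {μ : ℂ} {v : H} (hv0 : v ≠ 0) (hv : T v = μ • v)
    (hker : ∀ x, T x = μ • x → ∃ c : ℂ, c • v = x)
    (φ : H →ₗ[ℂ] ℂ) (hφ : ∀ x, φ (T x) = μ * φ x) (hφv : φ v ≠ 0) :
    algMult T μ = 1 := by
  set f := T - μ • (1 : Module.End ℂ H)
  have hf : ∀ x, f x = T x - μ • x := fun x => rfl
  have hkerf : LinearMap.ker f = ℂ ∙ v := by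
    ext x
    simp only [LinearMap.mem_ker, hf, sub_eq_zero, Submodule.mem_span_singleton]
    refine ⟨hker x, ?_⟩
    rintro ⟨c, rfl⟩
    rw [map_smul, hv, smul_comm]
  -- `φ` vanishes on the range of `f` but not on its kernel, so the two meet trivially.
  have hsq : LinearMap.ker (f ^ 2) ≤ LinearMap.ker f := by
    intro x hx
    have hfx : f x ∈ LinearMap.ker f := by simpa [pow_two] using hx
    obtain ⟨c, hc⟩ := Submodule.mem_span_singleton.mp (hkerf ▸ hfx)
    have hφf : φ (f x) = 0 := by rw [hf, map_sub, hφ, map_smul, smul_eq_mul, sub_self]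
    rw [← hc, map_smul, smul_eq_mul, mul_eq_zero] at hφf
    rw [LinearMap.mem_ker, ← hc, hφf.resolve_right hφv, zero_smul]
  rw [algMult, Module.End.iSup_ker_pow_eq_ker hsq, hkerf, finrank_span_singleton hv0]

theorem one_sub_norm_sq_mul_norm_sq_nonneg {c : ℂ} (hc : ‖c‖ ≤ 1) (z : ℂ) :
    0 ≤ (1 - ‖c‖ ^ 2) * ‖z‖ ^ 2 :=
  mul_nonneg (sub_nonneg.mpr (pow_le_one₀ (norm_nonneg _) hc)) (by positivity)

namespace Matrix

variable {m n : Type*} [Fintype m] [Fintype n]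

theorem trace_mul_conjTranspose_self_eq_sum_norm_sq (A : Matrix m n ℂ) :
    (A * Aᴴ).trace = ((∑ i, ∑ j, ‖A i j‖ ^ 2 : ℝ) : ℂ) := by
  simp [trace, mul_apply, Complex.mul_conj']

theorem sum_norm_sq_pos {ρ : Matrix m n ℂ} (hρ : ρ ≠ 0) : 0 < ∑ i, ∑ j, ‖ρ i j‖ ^ 2 := by
  obtain ⟨i, j, hij⟩ : ∃ i j, ρ i j ≠ 0 := by
    by_contra! h
    exact hρ (ext h)
  exact Finset.sum_pos' (fun _ _ => by positivity)
    ⟨i, Finset.mem_univ _, Finset.sum_pos' (fun _ _ => by positivity)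
      ⟨j, Finset.mem_univ _, by positivity⟩⟩

theorem one_sub_norm_sq_mul_sum_eq {C σ ρ : Matrix m n ℂ} {μ : ℂ}
    (hσ : ∑ i, ∑ j, ‖σ i j‖ ^ 2 = ∑ i, ∑ j, ‖ρ i j‖ ^ 2) (h : C ⊙ σ = μ • ρ) :
    (1 - ‖μ‖ ^ 2) * ∑ i, ∑ j, ‖ρ i j‖ ^ 2 = ∑ i, ∑ j, (1 - ‖C i j‖ ^ 2) * ‖σ i j‖ ^ 2 := by
  have hij : ∀ i j, ‖μ‖ ^ 2 * ‖ρ i j‖ ^ 2 = ‖C i j‖ ^ 2 * ‖σ i j‖ ^ 2 := fun i j => by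
    rw [← mul_pow, ← mul_pow, ← norm_mul, ← norm_mul, ← smul_eq_mul, ← smul_apply, ← h,
      hadamard_apply]
  simp only [sub_mul, one_mul, Finset.sum_sub_distrib, Finset.mul_sum, hij, hσ]

variable [DecidableEq n]

theorem conj_diagonal_mul (d : n → ℂ) (A : Matrix n m ℂ) (ρ : Matrix m m ℂ) :
    diagonal d * A * ρ * (diagonal d * A)ᴴ = vecMulVec d (star d) ⊙ (A * ρ * Aᴴ) := by
  have : diagonal d * A * ρ * (diagonal d * A)ᴴ =
      diagonal d * (A * ρ * Aᴴ) * diagonal (star d) := by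
    simp only [conjTranspose_mul, diagonal_conjTranspose, Matrix.mul_assoc]
  ext i j
  rw [this, mul_diagonal, diagonal_mul, hadamard_apply, vecMulVec_apply, Pi.star_apply]
  ring

variable {U C ρ : Matrix n n ℂ} {μ : ℂ}


theorem sum_norm_sq_unitary_conj (hU : U ∈ unitaryGroup n ℂ) (ρ : Matrix n n ℂ) :
    ∑ i, ∑ j, ‖(U * ρ * Uᴴ) i j‖ ^ 2 = ∑ i, ∑ j, ‖ρ i j‖ ^ 2 := by
  have hUU : Uᴴ * U = 1 := (mem_unitaryGroup_iff').mp hU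
  apply Complex.ofReal_injective
  rw [← trace_mul_conjTranspose_self_eq_sum_norm_sq,
    ← trace_mul_conjTranspose_self_eq_sum_norm_sq]
  calc (U * ρ * Uᴴ * (U * ρ * Uᴴ)ᴴ).trace = (U * (ρ * (Uᴴ * U) * ρᴴ) * Uᴴ).trace := by
        simp only [conjTranspose_mul, conjTranspose_conjTranspose, Matrix.mul_assoc]
    _ = (ρ * ρᴴ).trace := by
        rw [trace_mul_cycle, ← Matrix.mul_assoc, hUU, Matrix.one_mul, Matrix.mul_one]

theorem norm_le_one_of_hadamard_conj_eq_smul (hU : U ∈ unitaryGroup n ℂ)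
    (hC : ∀ i j, ‖C i j‖ ≤ 1) (hρ : ρ ≠ 0) (h : C ⊙ (U * ρ * Uᴴ) = μ • ρ) : ‖μ‖ ≤ 1 := by
  have key := one_sub_norm_sq_mul_sum_eq (sum_norm_sq_unitary_conj hU ρ) h
  have hrhs : 0 ≤ ∑ i, ∑ j, (1 - ‖C i j‖ ^ 2) * ‖(U * ρ * Uᴴ) i j‖ ^ 2 :=
    Finset.sum_nonneg fun i _ => Finset.sum_nonneg fun j _ =>
      one_sub_norm_sq_mul_norm_sq_nonneg (hC i j) _
  have hμ : 0 ≤ 1 - ‖μ‖ ^ 2 := nonneg_of_mul_nonneg_left (key ▸ hrhs) (sum_norm_sq_pos hρ)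
  exact (pow_le_one_iff_of_nonneg (norm_nonneg μ) two_ne_zero).mp (sub_nonneg.mp hμ)

theorem hadamard_conj_apply_eq_zero (hU : U ∈ unitaryGroup n ℂ)
    (hC : ∀ i j, ‖C i j‖ ≤ 1) (h : C ⊙ (U * ρ * Uᴴ) = μ • ρ) (hμ : ‖μ‖ = 1)
    {i j : n} (hij : ‖C i j‖ < 1) : (U * ρ * Uᴴ) i j = 0 := by
  have key := one_sub_norm_sq_mul_sum_eq (sum_norm_sq_unitary_conj hU ρ) h
  rw [hμ, one_pow, sub_self, zero_mul, eq_comm] at key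
  have hterm := fun i j => one_sub_norm_sq_mul_norm_sq_nonneg (hC i j) ((U * ρ * Uᴴ) i j)
  rw [Finset.sum_eq_zero_iff_of_nonneg fun i _ => Finset.sum_nonneg fun j _ => hterm i j] at key
  have hzero := (Finset.sum_eq_zero_iff_of_nonneg fun j _ => hterm i j).mp
    (key i (Finset.mem_univ _)) j (Finset.mem_univ _)
  have hCij : 0 < 1 - ‖C i j‖ ^ 2 := sub_pos.mpr (pow_lt_one₀ (norm_nonneg _) hij two_ne_zero)
  simpa [hCij.ne'] using hzero

theorem smul_eq_conj_of_hadamard_conj_eq_smul (hU : U ∈ unitaryGroup n ℂ)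
    (hC : ∀ i j, C i j = 1 ∨ ‖C i j‖ < 1) (h : C ⊙ (U * ρ * Uᴴ) = μ • ρ) (hμ : ‖μ‖ = 1) :
    μ • ρ = U * ρ * Uᴴ ∧ ∀ i j, ‖C i j‖ < 1 → ρ i j = 0 := by
  have hC' : ∀ i j, ‖C i j‖ ≤ 1 := fun i j => (hC i j).elim (fun h1 => h1 ▸ norm_one.le) le_of_lt
  have hσ : ∀ i j, ‖C i j‖ < 1 → (U * ρ * Uᴴ) i j = 0 := fun i j =>
    hadamard_conj_apply_eq_zero hU hC' h hμ
  have hμρ : μ • ρ = U * ρ * Uᴴ := by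
    rw [← h]
    ext i j
    rcases hC i j with h1 | h1 <;> simp [h1, hσ]
  refine ⟨hμρ, fun i j hij => ?_⟩
  have hμ0 : μ ≠ 0 := by rintro rfl; simp at hμ
  have : μ * ρ i j = 0 := by rw [← smul_eq_mul, ← smul_apply, hμρ, hσ i j hij]
  exact (mul_eq_zero.mp this).resolve_left hμ0

theorem hadamard_conj_one (hU : U ∈ unitaryGroup n ℂ) (hdiag : ∀ i, C i i = 1) :
    C ⊙ (U * 1 * Uᴴ) = 1 := by
  have hUU : U * Uᴴ = 1 := (mem_unitaryGroup_iff).mp hU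
  rw [Matrix.mul_one, hUU, hadamard_one]
  ext i j
  simp [diagonal_apply, one_apply, hdiag]

theorem trace_hadamard_conj (hU : U ∈ unitaryGroup n ℂ) (hdiag : ∀ i, C i i = 1)
    (ρ : Matrix n n ℂ) : (C ⊙ (U * ρ * Uᴴ)).trace = ρ.trace := by
  have hUU : Uᴴ * U = 1 := (mem_unitaryGroup_iff').mp hU
  have htr : (C ⊙ (U * ρ * Uᴴ)).trace = (U * ρ * Uᴴ).trace := by
    simp [trace, hdiag]
  rw [htr, trace_mul_cycle, hUU, Matrix.one_mul]

end Matrix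

def baseUnitary (r : ℂ) : Matrix (Fin 3) (Fin 3) ℂ := r • !![1, 0, 1; r, 1, -r; -r, 1, r]

def kraus₁ (r : ℂ) : Matrix (Fin 3) (Fin 3) ℂ := r • !![1, 0, 1; r, 1, -r; 0, 0, 0]

def kraus₂ (r : ℂ) : Matrix (Fin 3) (Fin 3) ℂ := r • !![0, 0, 0; 0, 0, 0; -r, 1, r]

def blockMultiplier (q w : ℂ) : Matrix (Fin 3) (Fin 3) ℂ :=
  !![1, 1, q * w; 1, 1, q * w; q * conj w, q * conj w, 1]

theorem baseUnitary_mem_unitaryGroup {r : ℂ} (hr : r * r = 2⁻¹) (hr' : conj r = r) :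
    baseUnitary r ∈ unitaryGroup (Fin 3) ℂ := by
  rw [mem_unitaryGroup_iff]
  ext i j
  fin_cases i <;> fin_cases j <;>
    simp [baseUnitary, mul_apply, Fin.sum_univ_three, hr', one_apply] <;> grind

theorem diagonal_mul_baseUnitary (r a b : ℂ) :
    diagonal ![a, a, b] * baseUnitary r = a • kraus₁ r + b • kraus₂ r := by
  ext i j
  fin_cases i <;> fin_cases j <;> simp [baseUnitary, kraus₁, kraus₂]

theorem mixture_eq_blockMultiplier_hadamard {r p q u v : ℂ} (hpq : p + q = 1) (hu : ‖u‖ = 1)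
    (hv : ‖v‖ = 1) (ρ : Matrix (Fin 3) (Fin 3) ℂ) :
    p • (kraus₁ r * ρ * (kraus₁ r)ᴴ + kraus₂ r * ρ * (kraus₂ r)ᴴ) +
        q • ((u • kraus₁ r + v • kraus₂ r) * ρ * (u • kraus₁ r + v • kraus₂ r)ᴴ) =
      blockMultiplier q (u * conj v) ⊙ (baseUnitary r * ρ * (baseUnitary r)ᴴ) := by
  have h₁ : kraus₁ r = diagonal ![1, 1, 0] * baseUnitary r := by simp [diagonal_mul_baseUnitary]
  have h₂ : kraus₂ r = diagonal ![0, 0, 1] * baseUnitary r := by simp [diagonal_mul_baseUnitary]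
  rw [← diagonal_mul_baseUnitary, h₁, h₂, conj_diagonal_mul, conj_diagonal_mul, conj_diagonal_mul,
    ← add_hadamard, ← smul_hadamard, ← smul_hadamard, ← add_hadamard]
  congr 1
  have hu' : u * conj u = 1 := by simp [mul_conj', hu]
  have hv' : v * conj v = 1 := by simp [mul_conj', hv]
  ext i j
  simp only [Matrix.add_apply, Matrix.smul_apply, vecMulVec_apply, Pi.star_apply, smul_eq_mul]
  fin_cases i <;> fin_cases j <;> simp [blockMultiplier, hu', hv', hpq, -mul_eq_mul_left_iff] <;>
    ring

theorem blockMultiplier_apply_self (q w : ℂ) (i : Fin 3) : blockMultiplier q w i i = 1 := by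
  fin_cases i <;> simp [blockMultiplier]

theorem blockMultiplier_eq_one_or_norm_lt_one {q w : ℂ} (hq : ‖q‖ < 1) (hw : ‖w‖ = 1)
    (i j : Fin 3) : blockMultiplier q w i j = 1 ∨ ‖blockMultiplier q w i j‖ < 1 := by
  fin_cases i <;> fin_cases j <;> simp [blockMultiplier, hw, hq]

theorem norm_blockMultiplier_apply_le_one {q w : ℂ} (hq : ‖q‖ < 1) (hw : ‖w‖ = 1)
    (i j : Fin 3) : ‖blockMultiplier q w i j‖ ≤ 1 :=
  (blockMultiplier_eq_one_or_norm_lt_one hq hw i j).elim (fun h => h ▸ norm_one.le) le_of_lt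

theorem norm_blockMultiplier_offDiagBlock_lt_one {q w : ℂ} (hq : ‖q‖ < 1) (hw : ‖w‖ = 1) :
    ‖blockMultiplier q w 0 2‖ < 1 ∧ ‖blockMultiplier q w 1 2‖ < 1 ∧
      ‖blockMultiplier q w 2 0‖ < 1 ∧ ‖blockMultiplier q w 2 1‖ < 1 := by
  simp [blockMultiplier, hw, hq]

theorem eq_one_of_smul_eq_baseUnitary_conj {r μ : ℂ} {ρ : Matrix (Fin 3) (Fin 3) ℂ}
    (hr : r ≠ 0) (hU : baseUnitary r ∈ unitaryGroup (Fin 3) ℂ) (hρ : ρ ≠ 0)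
    (h02 : ρ 0 2 = 0) (h12 : ρ 1 2 = 0) (h20 : ρ 2 0 = 0) (h21 : ρ 2 1 = 0)
    (h : μ • ρ = baseUnitary r * ρ * (baseUnitary r)ᴴ) : μ = 1 ∧ ρ = ρ 0 0 • 1 := by
  have hUU : (baseUnitary r)ᴴ * baseUnitary r = 1 := (mem_unitaryGroup_iff').mp hU
  have hcomm : μ • ρ * baseUnitary r = baseUnitary r * ρ := by
    rw [h, Matrix.mul_assoc _ _ (baseUnitary r), hUU, Matrix.mul_one]
  rw [baseUnitary, Matrix.mul_smul, Matrix.smul_mul, smul_mul] at hcomm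
  replace hcomm := smul_right_injective _ hr hcomm
  rw [eta_fin_three ρ, h02, h12, h20, h21] at hcomm
  rw [mul_fin_three, mul_fin_three, smul_of, EmbeddingLike.apply_eq_iff_eq] at hcomm
  simp only [smul_cons, smul_eq_mul, smul_empty, vecCons_inj, and_true] at hcomm
  obtain ⟨⟨e1, e2, e3⟩, ⟨e4, e5, e6⟩, -, e8, e9⟩ := hcomm
  by_cases hμ : μ = 1
  · subst hμ
    have hb : ρ 0 1 = 0 :=
      (mul_eq_zero.mp (by linear_combination -e5 : r * ρ 0 1 = 0)).resolve_left hr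
    have he : ρ 2 2 = ρ 0 0 := by linear_combination -e3 - r * hb
    have hd : ρ 1 1 = ρ 0 0 := by linear_combination -e8 + he + r * hb
    have hc : ρ 1 0 = 0 := by linear_combination e6 + r * hd - r * he
    refine ⟨rfl, ?_⟩
    ext i j
    fin_cases i <;> fin_cases j <;> simp [hb, hc, hd, he, h02, h12, h20, h21]
  · have hμ' : μ - 1 ≠ 0 := sub_ne_zero.mpr hμ
    have cancel : ∀ {x : ℂ}, (μ - 1) * x = 0 → x = 0 := fun hx =>
      (mul_eq_zero.mp hx).resolve_left hμ'
    have hb : ρ 0 1 = 0 := cancel (by linear_combination e2)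
    have he : ρ 2 2 = 0 := cancel ((mul_eq_zero.mp (by linear_combination e9 :
      (μ - 1) * ρ 2 2 * r = 0)).resolve_right hr)
    have hd : ρ 1 1 = 0 := cancel (by linear_combination e5 + r * hb)
    have ha : ρ 0 0 = 0 := cancel (by linear_combination e1 - μ * r * hb)
    have hc : ρ 1 0 = 0 := cancel (by linear_combination e4 - μ * r * hd + r * ha)
    refine absurd ?_ hρ
    ext i j
    fin_cases i <;> fin_cases j <;> simp [ha, hb, hc, hd, he, h02, h12, h20, h21]

theorem eq_one_of_blockMultiplier_hadamard_conj_eq_smul {r q w μ : ℂ}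
    {ρ : Matrix (Fin 3) (Fin 3) ℂ} (hr : r ≠ 0) (hU : baseUnitary r ∈ unitaryGroup (Fin 3) ℂ)
    (hq : ‖q‖ < 1) (hw : ‖w‖ = 1) (hρ : ρ ≠ 0)
    (h : blockMultiplier q w ⊙ (baseUnitary r * ρ * (baseUnitary r)ᴴ) = μ • ρ) (hμ : ‖μ‖ = 1) :
    μ = 1 ∧ ρ = ρ 0 0 • 1 := by
  obtain ⟨hμρ, hoff⟩ := smul_eq_conj_of_hadamard_conj_eq_smul hU
    (blockMultiplier_eq_one_or_norm_lt_one hq hw) h hμ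
  obtain ⟨h02, h12, h20, h21⟩ := norm_blockMultiplier_offDiagBlock_lt_one hq hw
  exact eq_one_of_smul_eq_baseUnitary_conj hr hU hρ (hoff 0 2 h02) (hoff 1 2 h12)
    (hoff 2 0 h20) (hoff 2 1 h21) hμρ

/-- With `r = 1/√2`, `B₁ = r·[[1,0,1],[r,1,−r],[0,0,0]]`,
`B₂ = r·[[0,0,0],[0,0,0],[−r,1,r]]`, and `U_k = e^{−ik}B₁ + e^{ik}B₂`, for every `k ∈ ℝ` and
every `0 < p ≤ 1` with `q = 1 − p`, the superoperator
`L_{k,k}(ρ) = p(B₁ρB₁* + B₂ρB₂*) + q·U_kρU_k*` on `3×3` complex matrices satisfies the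
eigenvalue condition: `1` is an eigenvalue of algebraic multiplicity one and every other
eigenvalue has absolute value strictly less than `1`. -/
theorem stmt18 (r : ℂ) (hr : r = ((Real.sqrt 2 : ℝ) : ℂ)⁻¹)
    (B1 B2 : Matrix (Fin 3) (Fin 3) ℂ)
    (hB1 : B1 = r • !![1, 0, 1; r, 1, -r; 0, 0, 0])
    (hB2 : B2 = r • !![0, 0, 0; 0, 0, 0; -r, 1, r])
    (Uk : ℝ → Matrix (Fin 3) (Fin 3) ℂ)
    (hUk : ∀ k : ℝ, Uk k = Complex.exp (-Complex.I * k) • B1 +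
      Complex.exp (Complex.I * k) • B2)
    (k : ℝ) (p q : ℝ) (hp0 : 0 < p) (hp1 : p ≤ 1) (hq : q = 1 - p)
    (Lkk : Module.End ℂ (Matrix (Fin 3) (Fin 3) ℂ))
    (hLkk : ∀ ρ, Lkk ρ = (p : ℂ) • (B1 * ρ * B1ᴴ + B2 * ρ * B2ᴴ) +
      (q : ℂ) • (Uk k * ρ * (Uk k)ᴴ)) :
    (∃ ρ, ρ ≠ 0 ∧ Lkk ρ = ρ) ∧ algMult Lkk 1 = 1 ∧
      ∀ (lam : ℂ) (ρ : Matrix (Fin 3) (Fin 3) ℂ),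
        ρ ≠ 0 → Lkk ρ = lam • ρ → lam ≠ 1 → ‖lam‖ < 1 := by
  have hr2 : r * r = 2⁻¹ := by
    rw [hr, ← mul_inv, ← ofReal_mul, Real.mul_self_sqrt zero_le_two]; norm_num
  have hr0 : r ≠ 0 := by rintro rfl; norm_num at hr2
  have hU := baseUnitary_mem_unitaryGroup hr2 (by rw [hr, map_inv₀, conj_ofReal])
  set u := Complex.exp (-Complex.I * k)
  set v := Complex.exp (Complex.I * k)
  have hu : ‖u‖ = 1 := by simp [u, Complex.norm_exp]
  have hv : ‖v‖ = 1 := by simp [v, Complex.norm_exp]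
  have hw : ‖u * conj v‖ = 1 := by rw [norm_mul, Complex.norm_conj, hu, hv, one_mul]
  have hq1 : ‖(q : ℂ)‖ < 1 := by
    rw [Complex.norm_real, Real.norm_eq_abs, abs_lt]; constructor <;> linarith
  set C := blockMultiplier q (u * conj v)
  have hL : ∀ ρ, Lkk ρ = C ⊙ (baseUnitary r * ρ * (baseUnitary r)ᴴ) := fun ρ => by
    rw [hLkk, hUk, hB1, hB2]
    exact mixture_eq_blockMultiplier_hadamard (by rw [hq]; push_cast; ring) hu hv ρ
  have hdiag : ∀ i, C i i = 1 := blockMultiplier_apply_self _ _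
  have hperipheral : ∀ (μ : ℂ) ρ, ρ ≠ 0 → Lkk ρ = μ • ρ → ‖μ‖ = 1 → μ = 1 ∧ ρ = ρ 0 0 • 1 :=
    fun μ ρ hρ h => eq_one_of_blockMultiplier_hadamard_conj_eq_smul hr0 hU hq1 hw hρ (hL ρ ▸ h)
  have hfix : Lkk 1 = 1 := by rw [hL, hadamard_conj_one hU hdiag]
  refine ⟨⟨1, one_ne_zero, hfix⟩, ?_, fun μ ρ hρ h hμ => ?_⟩
  · refine algMult_eq_one_of_invariant_functional one_ne_zero (by rw [hfix, one_smul])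
      (fun x hx => ?_) (traceLinearMap (Fin 3) ℂ ℂ)
      (fun x => by simp [hL, trace_hadamard_conj hU hdiag]) (by simp)
    by_cases hx0 : x = 0
    · exact ⟨0, by rw [hx0, zero_smul]⟩
    · exact ⟨x 0 0, (hperipheral 1 x hx0 hx norm_one).2.symm⟩
  · exact lt_of_le_of_ne (norm_le_one_of_hadamard_conj_eq_smul hU
      (norm_blockMultiplier_apply_le_one hq1 hw) hρ (hL ρ ▸ h))
      fun h1 => hμ (hperipheral μ ρ hρ h h1).1
end
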